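/- arXiv:2602.07122 — 5 statements merged into one kernel-verified Lean document; each statement's English description precedes it below -/
import Mathlib

section
/- For every real x ≥ 3 and natural N ≥ 1, defining t(N) = 0 and t(k) = Real.sqrt (1 + (x + k) * t(k+1)) for k < N (the truncated Ramanujan radical with zero tail), t(0) satisfies t(0) ≤ x + 1, and t(0) is monotone nondecreasing in N. -/
theorem trunc_zero_tail_bounds (x : ℝ) (hx : 3 ≤ x) (t : ℕ → ℕ → ℝ)
    (htail : ∀ N, t N N = 0)
    (hrec : ∀ N k, k < N → t N k = Real.sqrt (1 + (x + (k : ℝ)) * t N (k + 1))) :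
    (∀ N, 1 ≤ N → t N 0 ≤ x + 1) ∧
    (∀ N M, 1 ≤ N → N ≤ M → t N 0 ≤ t M 0) := by
  have hnonneg : ∀ N k, k ≤ N → 0 ≤ t N k := by
    intro N k h
    rcases eq_or_lt_of_le h with h | h
    · rw [h, htail]
    · rw [hrec N k h]; exact Real.sqrt_nonneg _
  have hbound : ∀ N d k, k + d = N → t N k ≤ x + k + 1 := by
    intro N d
    induction d with
    | zero =>
      intro k hk
      simp at hk
      subst hk
      rw [htail]
      have : (0:ℝ) ≤ (k:ℝ) := Nat.cast_nonneg k
      linarith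
    | succ d ih =>
      intro k hk
      have hkN : k < N := by omega
      have h1 : t N (k+1) ≤ x + ((k:ℝ)+1) + 1 := by
        have := ih (k+1) (by omega)
        push_cast at this
        linarith
      have hxk : (0:ℝ) ≤ x + k := by
        have : (0:ℝ) ≤ (k:ℝ) := Nat.cast_nonneg k
        linarith
      rw [hrec N k hkN]
      have h2 : 1 + (x + (k:ℝ)) * t N (k+1) ≤ (x + k + 1)^2 := by
        have : (x + (k:ℝ)) * t N (k+1) ≤ (x + k) * (x + ((k:ℝ)+1) + 1) :=
          mul_le_mul_of_nonneg_left h1 hxk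
        push_cast at this ⊢
        nlinarith
      calc Real.sqrt (1 + (x + (k:ℝ)) * t N (k+1)) ≤ Real.sqrt ((x + k + 1)^2) :=
            Real.sqrt_le_sqrt h2
        _ = x + k + 1 := Real.sqrt_sq (by positivity)
  have hmono : ∀ N M, N ≤ M → ∀ d k, k + d = N → t N k ≤ t M k := by
    intro N M hNM d
    induction d with
    | zero =>
      intro k hk
      simp at hk; subst hk
      rw [htail]
      exact hnonneg M k hNM
    | succ d ih =>
      intro k hk
      have hkN : k < N := by omega
      have hkM : k < M := lt_of_lt_of_le hkN hNM
      rw [hrec N k hkN, hrec M k hkM]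
      apply Real.sqrt_le_sqrt
      have h1 : t N (k+1) ≤ t M (k+1) := ih (k+1) (by omega)
      have hxk : (0:ℝ) ≤ x + k := by
        have : (0:ℝ) ≤ (k:ℝ) := Nat.cast_nonneg k
        linarith
      nlinarith
  constructor
  · intro N hN
    have := hbound N N 0 (by omega)
    simpa using this
  · intro N M _ hNM
    exact hmono N M hNM N 0 (by omega)
end

section
/- The sequence of truncated radicals s(N) defined by the downward recursion u(N) = 0, u(k) = Real.sqrt (1 + (k + 2) * u(k+1)) for k < N, and s(N) = u(0), converges to 3 as N → ∞. -/
/-!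
Write `e k = (k + 3) - u N k` for the distance of a truncated radical from the value of the
untruncated one, `√(1 + (k + 2)(k + 4)) = k + 3`. Since `u N k ≥ 1`, rationalising gives
`e k ≤ (k + 2) / (k + 4) * e (k + 1)`, and the product of these factors telescopes from
`e N = N + 3` down to `e 0 ≤ 6 / (N + 2)`. Together with `u N 0 ≤ 3` this squeezes `u N 0` to `3`.
-/

open Filter Topology

namespace RamanujanRadical

lemma sqrt_one_add_mul_le {x v : ℝ} (hx : 0 ≤ x) (hv : v ≤ x + 2) :
    √(1 + x * v) ≤ x + 1 :=
  Real.sqrt_le_iff.2 ⟨by linarith, by nlinarith⟩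

lemma sub_sqrt_one_add_mul_le {x v : ℝ} (hx : 0 ≤ x) (hv₀ : 0 ≤ v) (hv : v ≤ x + 2) :
    x + 1 - √(1 + x * v) ≤ x / (x + 2) * (x + 2 - v) := by
  set s := √(1 + x * v)
  have hs_one : 1 ≤ s := Real.one_le_sqrt.2 (by nlinarith)
  have hs_le : s ≤ x + 1 := sqrt_one_add_mul_le hx hv
  have hs_sq : s ^ 2 = 1 + x * v := Real.sq_sqrt (by positivity)
  rw [div_mul_eq_mul_div, le_div_iff₀ (by linarith)]
  calc (x + 1 - s) * (x + 2) ≤ (x + 1 - s) * (x + 1 + s) :=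
        mul_le_mul_of_nonneg_left (by linarith) (by linarith)
    _ = x * (x + 2 - v) := by linear_combination -hs_sq

def IsTruncatedRadical (N : ℕ) (v : ℕ → ℝ) : Prop :=
  v N = 0 ∧ ∀ k < N, v k = √(1 + ((k : ℝ) + 2) * v (k + 1))

namespace IsTruncatedRadical

variable {N : ℕ} {v : ℕ → ℝ} (hv : IsTruncatedRadical N v)
include hv

lemma nonneg {k : ℕ} (hk : k ≤ N) : 0 ≤ v k := by
  rcases hk.lt_or_eq with hk | rfl
  · rw [hv.2 k hk]
    exact Real.sqrt_nonneg _
  · exact hv.1.ge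

lemma le_add_three {k : ℕ} (hk : k ≤ N) : v k ≤ k + 3 := by
  induction hk using Nat.decreasingInduction with
  | self => rw [hv.1]; positivity
  | of_succ k hk ih =>
    push_cast at ih
    rw [hv.2 k hk]
    convert sqrt_one_add_mul_le (x := (k : ℝ) + 2) (by positivity) (by linarith) using 1
    ring

lemma add_three_sub_le {k : ℕ} (hk : k ≤ N) :
    k + 3 - v k ≤ (k + 2) * (k + 3) / (N + 2) := by
  induction hk using Nat.decreasingInduction with
  | self => rw [hv.1, mul_div_cancel_left₀ _ (by positivity)]; simp
  | of_succ k hk ih =>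
    have hv₀ := hv.nonneg hk
    have hv_le := hv.le_add_three hk
    push_cast at ih hv_le
    rw [hv.2 k hk]
    calc (k : ℝ) + 3 - √(1 + (k + 2) * v (k + 1))
        ≤ (k + 2) / (k + 2 + 2) * (k + 2 + 2 - v (k + 1)) := by
          convert sub_sqrt_one_add_mul_le (x := (k : ℝ) + 2) (by positivity) hv₀
            (by linarith) using 2
          ring
      _ ≤ (k + 2) / (k + 4) * ((k + 1 + 2) * (k + 1 + 3) / (N + 2)) := by
          rw [show (k : ℝ) + 2 + 2 = k + 4 by ring]
          gcongr
          linarith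
      _ = (k + 2) * (k + 3) / (N + 2) := by field_simp; ring

end IsTruncatedRadical

end RamanujanRadical

open RamanujanRadical in
theorem ramanujan_radical_limit (u : ℕ → ℕ → ℝ)
    (htail : ∀ N, u N N = 0)
    (hrec : ∀ N k, k < N → u N k = Real.sqrt (1 + ((k : ℝ) + 2) * u N (k + 1))) :
    Filter.Tendsto (fun N => u N 0) Filter.atTop (nhds 3) := by
  have hu (N : ℕ) : IsTruncatedRadical N (u N) := ⟨htail N, hrec N⟩
  have hlower (N : ℕ) : 3 - 6 / ((N + 2 : ℕ) : ℝ) ≤ u N 0 := by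
    have := (hu N).add_three_sub_le (Nat.zero_le N)
    push_cast at this ⊢
    linarith
  have hupper (N : ℕ) : u N 0 ≤ 3 := by
    simpa using (hu N).le_add_three (Nat.zero_le N)
  have hlim : Tendsto (fun N : ℕ => 3 - 6 / ((N + 2 : ℕ) : ℝ)) atTop (𝓝 3) := by
    simpa using tendsto_const_nhds.sub
      ((tendsto_const_div_atTop_nhds_zero_nat (6 : ℝ)).comp (tendsto_add_atTop_nat 2))
  exact tendsto_of_tendsto_of_tendsto_of_le_of_le hlim tendsto_const_nhds hlower hupper
end

section
/- Fix x = 3 and n_i = 2i - 1. For every N, defining the downward recursion v(N) = 3 + N^2 and v(k) = Real.sqrt ((2k+1)^2 + (3 + k^2 - (2k+1)) * v(k+1)) for k < N, one has v(0) = 3. -/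
theorem odd_radical_trunc (N : ℕ) (v : ℕ → ℝ)
    (htail : v N = 3 + (N : ℝ)^2)
    (hrec : ∀ k, k < N → v k = Real.sqrt ((2*(k:ℝ)+1)^2 + (3 + (k:ℝ)^2 - (2*(k:ℝ)+1)) * v (k + 1))) :
    v 0 = 3 := by
  have key : ∀ d, d ≤ N → v (N - d) = 3 + ((N - d : ℕ) : ℝ)^2 := by
    intro d
    induction d with
    | zero => intro _; simpa using htail
    | succ d ih =>
      intro hd
      have hd' : d ≤ N := Nat.le_of_succ_le hd
      have h1 : N - (d + 1) + 1 = N - d := by omega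
      have hk : N - (d + 1) < N := by omega
      have := hrec (N - (d + 1)) hk
      rw [h1] at this
      rw [ih hd'] at this
      set k : ℝ := ((N - (d + 1) : ℕ) : ℝ) with hkdef
      have hcast : ((N - d : ℕ) : ℝ) = k + 1 := by
        rw [hkdef]; push_cast [h1.symm]; ring
      rw [hcast] at this
      have hsq : (2*k+1)^2 + (3 + k^2 - (2*k+1)) * (3 + (k+1)^2) = (3 + k^2)^2 := by
        ring
      rw [hsq] at this
      rw [this]
      have hknn : (0:ℝ) ≤ 3 + k^2 := by positivity
      exact Real.sqrt_sq hknn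
  have := key N le_rfl
  simpa using this
end

section
/- Fix x = 3 and n_i = 2i. For every N, defining the downward recursion w(N) = 3 + N(N+1) and w(k) = Real.sqrt ((2k+2)^2 + (3 + k(k+1) - (2k+2)) * w(k+1)) for k < N, one has w(0) = 3. -/
theorem even_radical_trunc (N : ℕ) (w : ℕ → ℝ)
    (htail : w N = 3 + (N : ℝ) * ((N : ℝ) + 1))
    (hrec : ∀ k, k < N → w k = Real.sqrt ((2*(k:ℝ)+2)^2 + (3 + (k:ℝ)*((k:ℝ)+1) - (2*(k:ℝ)+2)) * w (k + 1))) :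
    w 0 = 3 := by
  have key : ∀ d, ∀ k, k + d = N → w k = 3 + (k : ℝ) * ((k : ℝ) + 1) := by
    intro d
    induction d with
    | zero => intro k hk; simp at hk; subst hk; exact htail
    | succ d ih =>
      intro k hk
      have hkN : k < N := by omega
      have hk1 : w (k + 1) = 3 + ((k : ℝ) + 1) * (((k : ℝ) + 1) + 1) := by
        have := ih (k + 1) (by omega)
        push_cast at this ⊢
        linarith
      rw [hrec k hkN, hk1]
      have : (2*(k:ℝ)+2)^2 + (3 + (k:ℝ)*((k:ℝ)+1) - (2*(k:ℝ)+2)) * (3 + ((k:ℝ) + 1) * (((k:ℝ) + 1) + 1)) = (3 + (k : ℝ) * ((k : ℝ) + 1))^2 := by ring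
      rw [this, Real.sqrt_sq]
      positivity
  have := key N 0 (by omega)
  simpa using this
end

section
/- For every N ≥ 1, defining the downward recursion q(N) = Real.sqrt (N + 1) and q(k) = Real.sqrt (Real.sqrt (k + 2) - 1 + (Real.sqrt (k + 2) - 1) * q(k+1)) for k < N, one has q(0) = 1. -/
theorem cor4_trunc (N : ℕ) (hN : 1 ≤ N) (q : ℕ → ℝ)
    (htail : q N = Real.sqrt ((N : ℝ) + 1))
    (hrec : ∀ k, k < N → q k = Real.sqrt (Real.sqrt ((k : ℝ) + 2) - 1 + (Real.sqrt ((k : ℝ) + 2) - 1) * q (k + 1))) :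
    q 0 = 1 := by
  have key : ∀ m k, k ≤ N → N - k ≤ m → q k = Real.sqrt ((k : ℝ) + 1) := by
    intro m
    induction m with
    | zero =>
      intro k hk hm
      have : k = N := le_antisymm hk (by omega)
      subst this; exact htail
    | succ m ih =>
      intro k hk hm
      rcases eq_or_lt_of_le hk with h | h
      · subst h; exact htail
      · have h1 : q (k + 1) = Real.sqrt ((k : ℝ) + 1 + 1) := by
          have := ih (k + 1) (by omega) (by omega)
          rw [this]; push_cast; ring_nf
        rw [hrec k h, h1]
        have hk2 : ((k : ℝ) + 2) = ((k : ℝ) + 1 + 1) := by ring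
        have hs : Real.sqrt ((k : ℝ) + 1 + 1) ≥ 0 := Real.sqrt_nonneg _
        have hsq : Real.sqrt ((k : ℝ) + 1 + 1) * Real.sqrt ((k : ℝ) + 1 + 1) = (k : ℝ) + 1 + 1 := by
          exact Real.mul_self_sqrt (by positivity)
        rw [hk2]
        congr 1
        nlinarith [hsq]
  have := key N 0 (by omega) (by omega)
  simpa using this
end
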